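/- Let 0 < p < 1/2. There exists a constant c_p > 0 such that for every m ≥ 3, with f_m := D_{2^{2m+1}}^w − D_{2^{2m}}^w and q_m := 2^{2m} + 2^{2m−2} + ⋯ + 2² + 2⁰, one has ‖ σ_{q_m}^κ f_m ‖_{L_{p,∞}(μ)} ≥ c_p · 2^{2m(1/p−2)} · ‖f_m*‖_{L_p(μ)}. -/

import Mathlib

open MeasureTheory ENNReal

noncomputable section

/-- The Walsh group: countable product of copies of ℤ₂. -/
abbrev G : Type := ℕ → ZMod 2

instance : TopologicalSpace (ZMod 2) := ⊥
instance : DiscreteTopology (ZMod 2) := ⟨rfl⟩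
instance : IsTopologicalAddGroup (ZMod 2) :=
  { continuous_add := continuous_of_discreteTopology
    continuous_neg := continuous_of_discreteTopology }
instance : MeasurableSpace G := borel G
instance : BorelSpace G := ⟨rfl⟩

/-- The normalized Haar (= product) measure on `G`. -/
def μ : Measure G := Measure.addHaarMeasure (⊤ : TopologicalSpace.PositiveCompacts G)

/-- The `k`-th Rademacher function. -/
def rad (k : ℕ) (x : G) : ℝ := (-1 : ℝ) ^ (x k).val

/-- `|n| = ⌊log₂ n⌋`. -/
def lg (n : ℕ) : ℕ := Nat.log 2 n

/-- The Walsh–Paley functions. -/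
def walsh (n : ℕ) (x : G) : ℝ :=
  ∏ k ∈ Finset.range (n + 1), rad k x ^ (n.testBit k).toNat

/-- The Walsh–Kaczmarz functions. -/
def kacz (n : ℕ) (x : G) : ℝ :=
  if n = 0 then 1
  else rad (lg n) x *
    ∏ k ∈ Finset.range (lg n), rad (lg n - 1 - k) x ^ (n.testBit k).toNat

/-- Walsh–Paley Dirichlet kernel. -/
def DW (n : ℕ) (x : G) : ℝ := ∑ k ∈ Finset.range n, walsh k x

/-- Walsh–Kaczmarz Dirichlet kernel. -/
def DK (n : ℕ) (x : G) : ℝ := ∑ k ∈ Finset.range n, kacz k x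

/-- Walsh–Paley Fejér kernel (with `KW 0 = 0`). -/
def KW (n : ℕ) (x : G) : ℝ := (∑ k ∈ Finset.range n, DW k x) / n

/-- Walsh–Kaczmarz Fejér kernel. -/
def KK (n : ℕ) (x : G) : ℝ := (∑ k ∈ Finset.range n, DK k x) / n

/-- Reversal of the first `A` coordinates. -/
def tau (A : ℕ) (x : G) : G := fun k => if k < A then x (A - 1 - k) else x k

/-- Walsh–Fourier coefficients. -/
def coefW (f : G → ℝ) (i : ℕ) : ℝ := ∫ x, f x * walsh i x ∂μ

/-- Walsh–Kaczmarz–Fourier coefficients. -/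
def coefK (f : G → ℝ) (i : ℕ) : ℝ := ∫ x, f x * kacz i x ∂μ

/-- Partial sums of the Walsh–Fourier series. -/
def SW (f : G → ℝ) (M : ℕ) (x : G) : ℝ := ∑ i ∈ Finset.range M, coefW f i * walsh i x

/-- Partial sums of the Walsh–Kaczmarz–Fourier series. -/
def SK (f : G → ℝ) (M : ℕ) (x : G) : ℝ := ∑ i ∈ Finset.range M, coefK f i * kacz i x

/-- Fejér means of the Walsh–Kaczmarz–Fourier series. -/
def sigmaK (f : G → ℝ) (n : ℕ) (x : G) : ℝ := (∑ j ∈ Finset.range n, SK f j x) / n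

/-- The dyadic martingale maximal function. -/
def fstar (f : G → ℝ) (x : G) : ℝ≥0∞ := ⨆ n : ℕ, ENNReal.ofReal |SW f (2 ^ n) x|

/-- Dyadic interval of rank `n` around `x`. -/
def cyl (n : ℕ) (x : G) : Set G := {y : G | ∀ k < n, y k = x k}

/-- Dyadic interval `I_n` around `0`. -/
def In (n : ℕ) : Set G := cyl n 0

/-- `e t`: the element of `G` whose `t`-th coordinate is `1` and the rest are `0`. -/
def e (t : ℕ) : G := fun k => if k = t then 1 else 0

/-- `q_m = 2^{2m} + 2^{2m-2} + ⋯ + 2² + 2⁰`. -/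
def qA (m : ℕ) : ℕ := ∑ i ∈ Finset.range (m + 1), 4 ^ i

/-- `f_m = D_{2^{2m+1}}^w − D_{2^{2m}}^w`. -/
def fm (m : ℕ) (x : G) : ℝ := DW (2 ^ (2 * m + 1)) x - DW (2 ^ (2 * m)) x

/-- The weak `L^p` quasinorm `‖f‖_{L_{p,∞}} = sup_{λ>0} λ · μ{|f|>λ}^{1/p}`. -/
def wnorm (f : G → ℝ) (p : ℝ) : ℝ≥0∞ :=
  ⨆ (l : ℝ) (_ : 0 < l), ENNReal.ofReal l * μ {x : G | l < |f x|} ^ (1 / p)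

/-- The set `J_N^{m,l}` (with `m : ℤ`, `-1 ≤ m ≤ l`). -/
def Jset (N l : ℕ) (m : ℤ) : Set G :=
  {x : G | (∀ j : ℕ, m < (j : ℤ) → j < l → x j = 0) ∧ x l = 1 ∧
    (∀ j : ℕ, l < j → j < N → x j = 0) ∧ (0 ≤ m → x m.toNat = 1)}


/-! ### Auxiliary lemmas -/

section Aux

open Finset

instance : μ.IsAddHaarMeasure := by unfold μ; infer_instance

lemma mu_univ : μ Set.univ = 1 := by
  have h := Measure.addHaarMeasure_self (K₀ := (⊤ : TopologicalSpace.PositiveCompacts G))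
  rwa [TopologicalSpace.PositiveCompacts.coe_top] at h

instance : IsProbabilityMeasure μ := ⟨mu_univ⟩

lemma zmod2_cases (a : ZMod 2) : a = 0 ∨ a = 1 := by revert a; decide

lemma rad_zero_coord {k : ℕ} {x : G} (h : x k = 0) : rad k x = 1 := by
  simp [rad, h]

lemma rad_one_coord {k : ℕ} {x : G} (h : x k = 1) : rad k x = -1 := by
  rw [rad, h]
  norm_num [ZMod.val_one]

lemma rad_pm (k : ℕ) (x : G) : rad k x = 1 ∨ rad k x = -1 := by
  rcases zmod2_cases (x k) with h | h
  · exact Or.inl (rad_zero_coord h)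
  · exact Or.inr (rad_one_coord h)

lemma rad_mul_self (k : ℕ) (x : G) : rad k x * rad k x = 1 := by
  rcases rad_pm k x with h | h <;> rw [h] <;> norm_num

lemma e_add_apply_ne {t k : ℕ} (h : k ≠ t) (x : G) : (e t + x) k = x k := by
  show e t k + x k = x k
  simp [e, h]

lemma e_add_apply_self (t : ℕ) (x : G) : (e t + x) t = 1 + x t := by
  show e t t + x t = 1 + x t
  simp [e]

lemma rad_e_add_ne {t k : ℕ} (h : k ≠ t) (x : G) : rad k (e t + x) = rad k x := by
  rw [rad, rad, e_add_apply_ne h]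

lemma rad_e_add_self (t : ℕ) (x : G) : rad t (e t + x) = - rad t x := by
  rcases zmod2_cases (x t) with h | h
  · rw [rad_one_coord (by rw [e_add_apply_self, h]; rfl), rad_zero_coord h]
  · rw [rad_zero_coord (by rw [e_add_apply_self, h]; decide), rad_one_coord h]
    norm_num

/-! ### Walsh functions -/

lemma testBit_false_of_lt_index {n j : ℕ} (h : n < j) : n.testBit j = false :=
  Nat.testBit_lt_two_pow (lt_of_lt_of_le (Nat.lt_two_pow_self (n := n)) (Nat.pow_le_pow_right (by norm_num) h.le))

lemma walsh_eq_prod {n N : ℕ} (h : n < 2 ^ N) (x : G) :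
    walsh n x = ∏ j ∈ Finset.range N, rad j x ^ (n.testBit j).toNat := by
  unfold walsh
  rcases le_total (n + 1) N with hN | hN
  · refine Finset.prod_subset (Finset.range_subset_range.2 hN) fun j _ hj => ?_
    have hj' : n < j := by
      have := Finset.mem_range.not.1 hj
      omega
    rw [testBit_false_of_lt_index hj']
    rfl
  · refine (Finset.prod_subset (Finset.range_subset_range.2 hN) fun j _ hj => ?_).symm
    have hj' : N ≤ j := by
      have := Finset.mem_range.not.1 hj
      omega
    rw [Nat.testBit_lt_two_pow (lt_of_lt_of_le h (Nat.pow_le_pow_right (by norm_num) hj'))]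
    rfl

lemma testBit_two_pow_add {L r : ℕ} (h : r < 2 ^ L) (j : ℕ) :
    (2 ^ L + r).testBit j = if j < L then r.testBit j else decide (j = L) := by
  have h1 := Nat.testBit_two_pow_mul_add 1 h j
  rw [mul_one] at h1
  rw [h1]
  by_cases hj : j < L
  · rw [if_pos hj, if_pos hj]
  · rw [if_neg hj, if_neg hj]
    rcases eq_or_lt_of_le (le_of_not_gt hj) with hle | hlt
    · rw [← hle]
      simp
    · have : (1 : ℕ) < 2 ^ (j - L) := by
        have : 1 ≤ j - L := by omega
        calc (1:ℕ) < 2 ^ 1 := by norm_num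
        _ ≤ 2 ^ (j - L) := Nat.pow_le_pow_right (by norm_num) this
      rw [Nat.testBit_lt_two_pow this]
      simp
      omega

lemma walsh_two_pow_add {L r : ℕ} (h : r < 2 ^ L) (x : G) :
    walsh (2 ^ L + r) x = rad L x * walsh r x := by
  have h1 : 2 ^ L + r < 2 ^ (L + 1) := by rw [pow_succ]; omega
  rw [walsh_eq_prod h1, walsh_eq_prod h, Finset.prod_range_succ]
  have hb : (2 ^ L + r).testBit L = true := by
    rw [testBit_two_pow_add h, if_neg (lt_irrefl L)]
    simp
  rw [hb]
  have hlow : ∀ j ∈ Finset.range L, rad j x ^ ((2 ^ L + r).testBit j).toNat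
      = rad j x ^ (r.testBit j).toNat := fun j hj => by
    rw [testBit_two_pow_add h, if_pos (Finset.mem_range.1 hj)]
  rw [Finset.prod_congr rfl hlow]
  simp [mul_comm]

lemma walsh_e_add (n t : ℕ) (x : G) :
    walsh n (e t + x) = (if n.testBit t then (-1 : ℝ) else 1) * walsh n x := by
  have hn : n < 2 ^ (max (n + 1) (t + 1)) := by
    calc n < 2 ^ (n + 1) := lt_of_lt_of_le (Nat.lt_two_pow_self (n := n)) (Nat.pow_le_pow_right (by norm_num) (Nat.le_succ n))
    _ ≤ _ := Nat.pow_le_pow_right (by norm_num) (le_max_left _ _)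
  rw [walsh_eq_prod hn, walsh_eq_prod hn]
  have key : ∀ j ∈ Finset.range (max (n + 1) (t + 1)), rad j (e t + x) ^ (n.testBit j).toNat
      = (if j = t then ((-1 : ℝ)) ^ (n.testBit j).toNat else 1) * rad j x ^ (n.testBit j).toNat := by
    intro j _
    by_cases hjt : j = t
    · subst hjt
      rw [rad_e_add_self, if_pos rfl, neg_pow]
    · rw [rad_e_add_ne hjt, if_neg hjt, one_mul]
  rw [Finset.prod_congr rfl key, Finset.prod_mul_distrib,
    Finset.prod_ite_eq' (Finset.range (max (n + 1) (t + 1))) t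
      (fun j => ((-1 : ℝ)) ^ (n.testBit j).toNat),
    if_pos (Finset.mem_range.2 (lt_of_lt_of_le (Nat.lt_succ_self t) (le_max_right _ _)))]
  cases hb : n.testBit t <;> simp [hb]

/-! ### Dirichlet kernels -/

lemma DW_two_pow (t : ℕ) (x : G) : DW (2 ^ t) x = ∏ j ∈ Finset.range t, (1 + rad j x) := by
  induction t with
  | zero =>
    simp only [pow_zero, Finset.range_zero, Finset.prod_empty, DW, Finset.range_one,
      Finset.sum_singleton]
    unfold walsh
    simp
  | succ t ih =>
    have h2 : (2 : ℕ) ^ (t + 1) = 2 ^ t + 2 ^ t := by rw [pow_succ]; omega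
    have hw : ∀ k ∈ Finset.range (2 ^ t), walsh (2 ^ t + k) x = rad t x * walsh k x :=
      fun k hk => walsh_two_pow_add (Finset.mem_range.1 hk) x
    have expand : DW (2 ^ (t + 1)) x = DW (2 ^ t) x + rad t x * DW (2 ^ t) x := by
      simp only [DW]
      rw [h2, Finset.sum_range_add]
      congr 1
      rw [Finset.sum_congr rfl hw, ← Finset.mul_sum]
    rw [expand, ih, Finset.prod_range_succ]
    ring

lemma mem_In_iff {n : ℕ} {x : G} : x ∈ In n ↔ ∀ k < n, x k = 0 := Iff.rfl

lemma DW_two_pow_of_mem {t : ℕ} {x : G} (h : ∀ k < t, x k = 0) : DW (2 ^ t) x = 2 ^ t := by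
  rw [DW_two_pow]
  have h2 : ∀ j ∈ Finset.range t, (1 + rad j x) = 2 := fun j hj => by
    rw [rad_zero_coord (h j (Finset.mem_range.1 hj))]; norm_num
  rw [Finset.prod_congr rfl h2, Finset.prod_const, Finset.card_range]

lemma DW_two_pow_of_not_mem {t : ℕ} {x : G} (h : ¬ ∀ k < t, x k = 0) : DW (2 ^ t) x = 0 := by
  push_neg at h
  obtain ⟨k, hk, hxk⟩ := h
  have hx1 : x k = 1 := (zmod2_cases (x k)).resolve_left hxk
  rw [DW_two_pow]
  exact Finset.prod_eq_zero (Finset.mem_range.2 hk) (by rw [rad_one_coord hx1]; ring)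

lemma four_pow (m : ℕ) : (4 : ℕ) ^ m = 2 ^ (2 * m) := by
  rw [show (4 : ℕ) = 2 ^ 2 by norm_num, ← pow_mul]

lemma fm_eq_sum (m : ℕ) (x : G) :
    fm m x = ∑ i ∈ Finset.Ico (4 ^ m) (2 * 4 ^ m), walsh i x := by
  have h1 : (2 : ℕ) ^ (2 * m) = 4 ^ m := (four_pow m).symm
  have h2 : (2 : ℕ) ^ (2 * m + 1) = 2 * 4 ^ m := by rw [pow_succ, h1]; ring
  rw [fm, h1, h2, Finset.sum_Ico_eq_sub _ (by omega : 4 ^ m ≤ 2 * 4 ^ m)]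
  simp only [DW]

lemma fm_eq (m : ℕ) (x : G) : fm m x = rad (2 * m) x * DW (4 ^ m) x := by
  rw [fm_eq_sum, Finset.sum_Ico_eq_sum_range, show 2 * 4 ^ m - 4 ^ m = 4 ^ m by omega]
  have hw : ∀ i ∈ Finset.range (4 ^ m), walsh (4 ^ m + i) x = rad (2 * m) x * walsh i x := by
    intro i hi
    rw [four_pow m] at hi ⊢
    exact walsh_two_pow_add (Finset.mem_range.1 hi) x
  rw [Finset.sum_congr rfl hw, ← Finset.mul_sum]
  simp only [DW]

/-! ### Measures of cylinders -/

lemma measurableSet_coord (k : ℕ) (v : ZMod 2) : MeasurableSet {x : G | x k = v} := by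
  have h : {x : G | x k = v} = (fun x : G => x k) ⁻¹' ({v} : Set (ZMod 2)) := by
    ext x
    simp
  rw [h]
  exact ((continuous_apply k).isOpen_preimage _ (isOpen_discrete _)).measurableSet

lemma measurableSet_In (n : ℕ) : MeasurableSet (In n) := by
  have h : In n = ⋂ k ∈ Finset.range n, {x : G | x k = 0} := by
    ext x
    simp only [Set.mem_iInter, Finset.mem_range, mem_In_iff]
    exact ⟨fun h k hk => h k hk, fun h k hk => h k hk⟩
  rw [h]
  exact Finset.measurableSet_biInter _ fun k _ => measurableSet_coord k 0

lemma measurable_e_add (g : G) : Measurable fun x : G => g + x :=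
  (continuous_const.add continuous_id).measurable

lemma mu_In (n : ℕ) : μ (In n) = ((2 : ℝ≥0∞)⁻¹) ^ n := by
  induction n with
  | zero =>
    have : In 0 = Set.univ := Set.eq_univ_of_forall fun x => by
      rw [mem_In_iff]; omega
    rw [this, mu_univ, pow_zero]
  | succ n ih =>
    have key : In n = In (n + 1) ∪ (fun x => e n + x) ⁻¹' In (n + 1) := by
      ext x
      simp only [Set.mem_union, Set.mem_preimage, mem_In_iff]
      constructor
      · intro hx
        rcases zmod2_cases (x n) with h | h
        · exact Or.inl fun k hk => by
            rcases Nat.lt_succ_iff_lt_or_eq.1 hk with h' | h'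
            · exact hx k h'
            · rw [h', h]
        · refine Or.inr fun k hk => ?_
          rcases Nat.lt_succ_iff_lt_or_eq.1 hk with h' | h'
          · rw [e_add_apply_ne (by omega), hx k h']
          · rw [h', e_add_apply_self, h]; decide
      · rintro (hx | hx) k hk
        · exact hx k (by omega)
        · have := hx k (by omega)
          rwa [e_add_apply_ne (by omega)] at this
    have hdisj : Disjoint (In (n + 1)) ((fun x => e n + x) ⁻¹' In (n + 1)) := by
      rw [Set.disjoint_left]
      intro x hx1 hx2
      have h1 : x n = 0 := hx1 n (by omega)
      have h2 : (e n + x) n = 0 := hx2 n (by omega)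
      rw [e_add_apply_self, h1] at h2
      exact absurd h2 (by decide)
    have hmeas : MeasurableSet ((fun x => e n + x) ⁻¹' In (n + 1)) :=
      measurable_e_add (e n) (measurableSet_In (n + 1))
    have hsum : μ (In n) = μ (In (n + 1)) + μ (In (n + 1)) := by
      rw [key, measure_union hdisj hmeas, measure_preimage_add]
    have : μ (In (n + 1)) = 2⁻¹ * ((2 : ℝ≥0∞)⁻¹) ^ n := by
      rw [← ih, hsum, ← two_mul, ← mul_assoc,
        ENNReal.inv_mul_cancel two_ne_zero ENNReal.ofNat_ne_top, one_mul]
    rw [this, pow_succ, mul_comm]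

lemma mu_pair {a b : ℕ} (hab : a ≠ b) : μ {x : G | x a = 1 ∧ x b = 0} = (4 : ℝ≥0∞)⁻¹ := by
  set B : ZMod 2 → ZMod 2 → Set G := fun v w => {x : G | x a = v ∧ x b = w} with hB
  have hmeas : ∀ v w, MeasurableSet (B v w) := fun v w =>
    (measurableSet_coord a v).inter (measurableSet_coord b w)
  have e_aa : e a a = 1 := by simp [e]
  have e_ab : e a b = 0 := by simp [e, Ne.symm hab]
  have e_ba : e b a = 0 := by simp [e, hab]
  have e_bb : e b b = 1 := by simp [e]
  have hadd : ∀ (g : G) (v w : ZMod 2),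
      (fun x => g + x) ⁻¹' B v w = B (v - g a) (w - g b) := by
    intro g v w
    ext x
    show g a + x a = v ∧ g b + x b = w ↔ x a = v - g a ∧ x b = w - g b
    constructor
    · rintro ⟨h1, h2⟩
      exact ⟨by rw [← h1]; ring, by rw [← h2]; ring⟩
    · rintro ⟨h1, h2⟩
      exact ⟨by rw [h1]; ring, by rw [h2]; ring⟩
  have m10 : μ (B 1 0) = μ (B 0 0) := by
    conv_lhs => rw [← measure_preimage_add μ (e a) (B 1 0)]
    rw [hadd, e_aa, e_ab, show (1 - 1 : ZMod 2) = 0 by decide, show (0 - 0 : ZMod 2) = 0 by decide]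
  have m01 : μ (B 0 1) = μ (B 0 0) := by
    conv_lhs => rw [← measure_preimage_add μ (e b) (B 0 1)]
    rw [hadd, e_ba, e_bb, show (0 - 0 : ZMod 2) = 0 by decide, show (1 - 1 : ZMod 2) = 0 by decide]
  have m11 : μ (B 1 1) = μ (B 0 0) := by
    conv_lhs => rw [← measure_preimage_add μ (e a + e b) (B 1 1)]
    rw [hadd]
    have h1 : (e a + e b) a = 1 := by show e a a + e b a = 1; rw [e_aa, e_ba, add_zero]
    have h2 : (e a + e b) b = 1 := by show e a b + e b b = 1; rw [e_ab, e_bb, zero_add]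
    rw [h1, h2, show (1 - 1 : ZMod 2) = 0 by decide]
  have cover : (Set.univ : Set G) = (B 0 0 ∪ B 1 0) ∪ (B 0 1 ∪ B 1 1) := by
    ext x
    simp only [Set.mem_univ, true_iff, Set.mem_union, hB, Set.mem_setOf_eq]
    rcases zmod2_cases (x a) with h | h <;> rcases zmod2_cases (x b) with h' | h' <;>
      simp [h, h']
  have d1 : Disjoint (B 0 0) (B 1 0) := by
    rw [Set.disjoint_left]
    rintro x ⟨h1, _⟩ ⟨h2, _⟩
    rw [h1] at h2
    exact absurd h2 (by decide)
  have d2 : Disjoint (B 0 1) (B 1 1) := by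
    rw [Set.disjoint_left]
    rintro x ⟨h1, _⟩ ⟨h2, _⟩
    rw [h1] at h2
    exact absurd h2 (by decide)
  have d3 : Disjoint (B 0 0 ∪ B 1 0) (B 0 1 ∪ B 1 1) := by
    rw [Set.disjoint_left]
    rintro x (⟨_, h1⟩ | ⟨_, h1⟩) (⟨_, h2⟩ | ⟨_, h2⟩) <;> rw [h1] at h2 <;>
      exact absurd h2 (by decide)
  have htot : μ (B 0 0) + μ (B 0 0) + (μ (B 0 0) + μ (B 0 0)) = 1 := by
    conv_rhs => rw [← mu_univ, cover]
    rw [measure_union d3 ((hmeas 0 1).union (hmeas 1 1)), measure_union d1 (hmeas 1 0),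
      measure_union d2 (hmeas 1 1), m10, m01, m11]
  have h4 : (4 : ℝ≥0∞) * μ (B 0 0) = 1 := by
    rw [← htot]
    ring
  have hB00 : μ (B 0 0) = (4 : ℝ≥0∞)⁻¹ := by
    have h5 := congrArg (fun z => (4 : ℝ≥0∞)⁻¹ * z) h4
    simp only [← mul_assoc, ENNReal.inv_mul_cancel (by norm_num : (4:ℝ≥0∞) ≠ 0)
      (by norm_num : (4:ℝ≥0∞) ≠ ⊤), one_mul, mul_one] at h5
    exact h5
  show μ (B 1 0) = _
  rw [m10, hB00]

end Aux

section Aux2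

/-! ### Vanishing integrals via translation invariance -/

lemma integral_zero_of_flip {h : G → ℝ} (t : ℕ) (hf : ∀ x, h (e t + x) = - h x) :
    ∫ x, h x ∂μ = 0 := by
  have h1 : ∫ x, h (e t + x) ∂μ = ∫ x, h x ∂μ :=
    MeasureTheory.integral_add_left_eq_self h (e t)
  have h2 : ∫ x, h (e t + x) ∂μ = - ∫ x, h x ∂μ := by
    simp_rw [hf]
    exact MeasureTheory.integral_neg h
  rw [h2] at h1
  linarith

/-! ### Kaczmarz functions -/

lemma kacz_ne_zero_eq {n : ℕ} (hn : n ≠ 0) (x : G) :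
    kacz n x = rad (lg n) x *
      ∏ k ∈ Finset.range (lg n), rad (lg n - 1 - k) x ^ (n.testBit k).toNat := by
  rw [kacz, if_neg hn]

lemma lg_two_pow_add {L r : ℕ} (h : r < 2 ^ L) : lg (2 ^ L + r) = L :=
  Nat.log_eq_of_pow_le_of_lt_pow (Nat.le_add_right _ _) (by rw [pow_succ]; omega)

lemma kacz_two_pow_add {L r : ℕ} (h : r < 2 ^ L) (x : G) :
    kacz (2 ^ L + r) x = rad L x *
      ∏ k ∈ Finset.range L, rad (L - 1 - k) x ^ (r.testBit k).toNat := by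
  rw [kacz_ne_zero_eq (by positivity) x, lg_two_pow_add h]
  congr 1
  refine Finset.prod_congr rfl fun k hk => ?_
  rw [testBit_two_pow_add h, if_pos (Finset.mem_range.1 hk)]

lemma kacz_mul_self (n : ℕ) (x : G) : kacz n x * kacz n x = 1 := by
  by_cases hn : n = 0
  · simp [kacz, hn]
  rw [kacz_ne_zero_eq hn x, mul_mul_mul_comm, rad_mul_self, one_mul, ← Finset.prod_mul_distrib]
  refine Finset.prod_eq_one fun k _ => ?_
  rw [← mul_pow, rad_mul_self, one_pow]

lemma kacz_pm (n : ℕ) (x : G) : kacz n x = 1 ∨ kacz n x = -1 :=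
  mul_self_eq_one_iff.1 (kacz_mul_self n x)

lemma lg_lt {i n : ℕ} (hi : i ≠ 0) (h : i < 2 ^ n) : lg i < n := Nat.log_lt_of_lt_pow hi h

lemma kacz_of_lt {i n : ℕ} {x : G} (hi : i < 2 ^ n) (hx : ∀ k < n, x k = 0) : kacz i x = 1 := by
  by_cases h0 : i = 0
  · simp [kacz, h0]
  have hL : lg i < n := lg_lt h0 hi
  rw [kacz_ne_zero_eq h0 x, rad_zero_coord (hx _ hL), one_mul]
  refine Finset.prod_eq_one fun k hk => ?_
  rw [rad_zero_coord (hx _ (by omega))]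
  exact one_pow _

lemma kacz_block_of_In {m r : ℕ} (hr : r < 4 ^ m) {x : G} (hx : ∀ k < 2 * m, x k = 0) :
    kacz (4 ^ m + r) x = rad (2 * m) x := by
  rw [four_pow m] at hr ⊢
  rw [kacz_two_pow_add hr]
  have h1 : ∀ k ∈ Finset.range (2 * m), rad (2 * m - 1 - k) x ^ (r.testBit k).toNat = 1 := by
    intro k hk
    have := Finset.mem_range.1 hk
    rw [rad_zero_coord (hx _ (by omega))]
    exact one_pow _
  rw [Finset.prod_eq_one h1, mul_one]

lemma kacz_e_add {i t : ℕ} (ht : lg i < t) (x : G) : kacz i (e t + x) = kacz i x := by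
  by_cases h0 : i = 0
  · simp [kacz, h0]
  rw [kacz_ne_zero_eq h0, kacz_ne_zero_eq h0, rad_e_add_ne (by omega)]
  congr 1
  refine Finset.prod_congr rfl fun k hk => ?_
  have := Finset.mem_range.1 hk
  rw [rad_e_add_ne (by omega : lg i - 1 - k ≠ t)]

/-! ### Translates of `fm` -/

lemma fm_e_add {m t : ℕ} (ht : 2 * m ≤ t) (x : G) :
    fm m (e t + x) = (if t = 2 * m then (-1 : ℝ) else 1) * fm m x := by
  rw [fm_eq_sum, fm_eq_sum, Finset.mul_sum]
  refine Finset.sum_congr rfl fun i hi => ?_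
  obtain ⟨h1, h2⟩ := Finset.mem_Ico.1 hi
  rw [walsh_e_add]
  congr 1
  rw [four_pow m] at h1 h2
  have hrem : i - 2 ^ (2 * m) < 2 ^ (2 * m) := by omega
  have hbit : i.testBit t = decide (t = 2 * m) := by
    conv_lhs => rw [show i = 2 ^ (2 * m) + (i - 2 ^ (2 * m)) by omega]
    rw [testBit_two_pow_add hrem, if_neg (by omega : ¬ t < 2 * m)]
  rw [hbit]
  by_cases h : t = 2 * m
  · simp [h]
  · simp [h]

/-! ### Fourier coefficients of `fm` -/

lemma coefK_fm_low {m i : ℕ} (hm : 1 ≤ m) (hi : i < 4 ^ m) : coefK (fm m) i = 0 := by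
  unfold coefK
  apply integral_zero_of_flip (2 * m)
  intro x
  have hlg : lg i < 2 * m := by
    by_cases h0 : i = 0
    · subst h0
      show Nat.log 2 0 < 2 * m
      rw [Nat.log_zero_right]
      omega
    · exact lg_lt h0 (by rw [← four_pow]; exact hi)
  rw [kacz_e_add hlg, fm_e_add le_rfl, if_pos rfl]
  ring

lemma coefK_fm_block {m i : ℕ} (h1 : 4 ^ m ≤ i) (h2 : i < 2 * 4 ^ m) : coefK (fm m) i = 1 := by
  unfold coefK
  have hpt : ∀ x : G, fm m x * kacz i x
      = Set.indicator (In (2 * m)) (fun _ => ((4 : ℝ) ^ m)) x := by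
    intro x
    by_cases hx : ∀ k < 2 * m, x k = 0
    · rw [Set.indicator_of_mem (mem_In_iff.2 hx)]
      have hdecomp : i = 4 ^ m + (i - 4 ^ m) := by omega
      rw [fm_eq, hdecomp, kacz_block_of_In (by omega) hx]
      rw [show (4:ℕ)^m = 2^(2*m) from four_pow m, DW_two_pow_of_mem hx]
      have : rad (2 * m) x * (2:ℝ) ^ (2*m) * rad (2 * m) x
          = (rad (2 * m) x * rad (2 * m) x) * (2:ℝ) ^ (2*m) := by ring
      rw [this, rad_mul_self, one_mul]
      rw [show ((4:ℝ))^m = 2^(2*m) by rw [show (4:ℝ) = 2^2 by norm_num, ← pow_mul]]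
    · rw [Set.indicator_of_notMem (fun hmem => hx (mem_In_iff.1 hmem))]
      rw [fm_eq, show (4:ℕ)^m = 2^(2*m) from four_pow m, DW_two_pow_of_not_mem hx]
      ring
  simp only [hpt]
  rw [MeasureTheory.integral_indicator_const _ (measurableSet_In _), measureReal_def, mu_In, smul_eq_mul]
  rw [ENNReal.toReal_pow, ENNReal.toReal_inv, ENNReal.toReal_ofNat]
  rw [show ((4:ℝ))^m = 2^(2*m) by rw [show (4:ℝ) = 2^2 by norm_num, ← pow_mul], inv_pow]
  rw [inv_mul_cancel₀ (by positivity)]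

lemma walsh_of_lt {i n : ℕ} {x : G} (hi : i < 2 ^ n) (hx : ∀ k < n, x k = 0) : walsh i x = 1 := by
  rw [walsh_eq_prod hi]
  refine Finset.prod_eq_one fun k hk => ?_
  rw [rad_zero_coord (hx _ (Finset.mem_range.1 hk))]
  exact one_pow _

lemma coefW_fm_low {m i : ℕ} (hi : i < 4 ^ m) : coefW (fm m) i = 0 := by
  unfold coefW
  apply integral_zero_of_flip (2 * m)
  intro x
  have hbit : i.testBit (2 * m) = false :=
    Nat.testBit_lt_two_pow (by rw [← four_pow]; exact hi)
  rw [walsh_e_add, hbit, fm_e_add le_rfl, if_pos rfl]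
  norm_num

lemma coefW_fm_block {m i : ℕ} (h1 : 4 ^ m ≤ i) (h2 : i < 2 * 4 ^ m) : coefW (fm m) i = 1 := by
  unfold coefW
  have hpt : ∀ x : G, fm m x * walsh i x
      = Set.indicator (In (2 * m)) (fun _ => ((4 : ℝ) ^ m)) x := by
    intro x
    by_cases hx : ∀ k < 2 * m, x k = 0
    · rw [Set.indicator_of_mem (mem_In_iff.2 hx)]
      rw [four_pow m] at h1 h2
      have hdecomp : i = 2 ^ (2 * m) + (i - 2 ^ (2 * m)) := by omega
      rw [fm_eq, hdecomp, walsh_two_pow_add (by omega),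
        walsh_of_lt (show i - 2^(2*m) < 2^(2*m) by omega) hx, mul_one]
      rw [show (4:ℕ)^m = 2^(2*m) from four_pow m, DW_two_pow_of_mem hx]
      have : rad (2 * m) x * (2:ℝ) ^ (2*m) * rad (2 * m) x
          = (rad (2 * m) x * rad (2 * m) x) * (2:ℝ) ^ (2*m) := by ring
      rw [this, rad_mul_self, one_mul]
      rw [show ((4:ℝ))^m = 2^(2*m) by rw [show (4:ℝ) = 2^2 by norm_num, ← pow_mul]]
    · rw [Set.indicator_of_notMem (fun hmem => hx (mem_In_iff.1 hmem))]
      rw [fm_eq, show (4:ℕ)^m = 2^(2*m) from four_pow m, DW_two_pow_of_not_mem hx]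
      ring
  simp only [hpt]
  rw [MeasureTheory.integral_indicator_const _ (measurableSet_In _), measureReal_def, mu_In, smul_eq_mul]
  rw [ENNReal.toReal_pow, ENNReal.toReal_inv, ENNReal.toReal_ofNat]
  rw [show ((4:ℝ))^m = 2^(2*m) by rw [show (4:ℝ) = 2^2 by norm_num, ← pow_mul], inv_pow]
  rw [inv_mul_cancel₀ (by positivity)]

lemma testBit_lg_self {i : ℕ} (hi : i ≠ 0) : i.testBit (lg i) = true := by
  have h1 : 2 ^ lg i ≤ i := Nat.pow_log_le_self 2 hi
  have h2 : i < 2 ^ (lg i + 1) := Nat.lt_pow_succ_log_self (by norm_num) i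
  have hdecomp : i = 2 ^ lg i + (i - 2 ^ lg i) := by omega
  have h3 := testBit_two_pow_add (show i - 2 ^ lg i < 2 ^ lg i by rw [pow_succ] at h2; omega) (lg i)
  rw [← hdecomp, if_neg (lt_irrefl _)] at h3
  rw [h3]
  simp

lemma coefW_fm_high {m i : ℕ} (h : 2 * 4 ^ m ≤ i) : coefW (fm m) i = 0 := by
  unfold coefW
  have hi0 : i ≠ 0 := by
    have : 0 < 4 ^ m := by positivity
    omega
  have hlg : 2 * m + 1 ≤ lg i := by
    have h1 : (2:ℕ) ^ (2 * m + 1) ≤ i := by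
      rw [pow_succ, ← four_pow]
      omega
    exact (Nat.le_log_iff_pow_le (by norm_num) hi0).2 h1
  apply integral_zero_of_flip (lg i)
  intro x
  rw [fm_e_add (by omega), if_neg (by omega), one_mul, walsh_e_add, testBit_lg_self hi0,
    if_pos rfl]
  ring

lemma coefW_fm {m i : ℕ} : coefW (fm m) i = if 4 ^ m ≤ i ∧ i < 2 * 4 ^ m then 1 else 0 := by
  by_cases h1 : i < 4 ^ m
  · rw [coefW_fm_low h1, if_neg (by omega)]
  by_cases h2 : i < 2 * 4 ^ m
  · rw [coefW_fm_block (by omega) h2, if_pos (by omega)]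
  · rw [coefW_fm_high (by omega), if_neg (by omega)]

/-! ### Partial sums and maximal function of `fm` -/

lemma SW_fm_low {m n : ℕ} (hn : n ≤ 2 * m) (x : G) : SW (fm m) (2 ^ n) x = 0 := by
  unfold SW
  refine Finset.sum_eq_zero fun i hi => ?_
  have hi' : i < 4 ^ m := by
    calc i < 2 ^ n := Finset.mem_range.1 hi
    _ ≤ 2 ^ (2 * m) := Nat.pow_le_pow_right (by norm_num) hn
    _ = 4 ^ m := (four_pow m).symm
  rw [coefW_fm, if_neg (by omega), zero_mul]

lemma SW_fm_high {m n : ℕ} (hn : 2 * m + 1 ≤ n) (x : G) : SW (fm m) (2 ^ n) x = fm m x := by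
  unfold SW
  have key : ∀ i ∈ Finset.range (2 ^ n), coefW (fm m) i * walsh i x
      = if i ∈ Finset.Ico (4 ^ m) (2 * 4 ^ m) then walsh i x else 0 := by
    intro i _
    rw [coefW_fm]
    by_cases h : 4 ^ m ≤ i ∧ i < 2 * 4 ^ m
    · rw [if_pos h, one_mul, if_pos (Finset.mem_Ico.2 h)]
    · rw [if_neg h, zero_mul, if_neg (fun hmem => h (Finset.mem_Ico.1 hmem))]
  rw [Finset.sum_congr rfl key, Finset.sum_ite_mem]
  have hsub : Finset.range (2 ^ n) ∩ Finset.Ico (4 ^ m) (2 * 4 ^ m)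
      = Finset.Ico (4 ^ m) (2 * 4 ^ m) := by
    rw [Finset.inter_eq_right]
    intro i hi
    have h2 := (Finset.mem_Ico.1 hi).2
    have h3 : 2 * 4 ^ m ≤ 2 ^ n := by
      calc 2 * 4 ^ m = 2 ^ (2 * m + 1) := by rw [pow_succ, ← four_pow]; ring
      _ ≤ 2 ^ n := Nat.pow_le_pow_right (by norm_num) hn
    exact Finset.mem_range.2 (by omega)
  rw [hsub, ← fm_eq_sum]

lemma fm_abs (m : ℕ) (x : G) :
    |fm m x| = if (∀ k < 2 * m, x k = 0) then (4 : ℝ) ^ m else 0 := by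
  by_cases hx : ∀ k < 2 * m, x k = 0
  · rw [if_pos hx, fm_eq, show (4:ℕ)^m = 2^(2*m) from four_pow m, DW_two_pow_of_mem hx, abs_mul]
    rcases rad_pm (2 * m) x with h | h <;> rw [h] <;>
      rw [show ((4:ℝ))^m = 2^(2*m) by rw [show (4:ℝ) = 2^2 by norm_num, ← pow_mul]] <;>
      simp [abs_of_nonneg, pow_nonneg]
  · rw [if_neg hx, fm_eq, show (4:ℕ)^m = 2^(2*m) from four_pow m, DW_two_pow_of_not_mem hx,
      mul_zero, abs_zero]

lemma fstar_fm (m : ℕ) (x : G) : fstar (fm m) x = ENNReal.ofReal |fm m x| := by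
  apply le_antisymm
  · refine iSup_le fun n => ?_
    rcases le_or_gt n (2 * m) with hn | hn
    · rw [SW_fm_low hn]
      simp
    · rw [SW_fm_high hn]
  · have h := le_iSup (fun n => ENNReal.ofReal |SW (fm m) (2 ^ n) x|) (2 * m + 1)
    rwa [SW_fm_high le_rfl] at h

lemma lintegral_fstar (m : ℕ) {p : ℝ} (hp : 0 < p) :
    ∫⁻ x, fstar (fm m) x ^ p ∂μ
      = (ENNReal.ofReal ((4 : ℝ) ^ m)) ^ p * ((2 : ℝ≥0∞)⁻¹) ^ (2 * m) := by
  have key : ∀ x : G, fstar (fm m) x ^ p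
      = Set.indicator (In (2 * m)) (fun _ => (ENNReal.ofReal ((4 : ℝ) ^ m)) ^ p) x := by
    intro x
    rw [fstar_fm, fm_abs]
    by_cases hx : ∀ k < 2 * m, x k = 0
    · rw [if_pos hx, Set.indicator_of_mem (mem_In_iff.2 hx)]
    · rw [if_neg hx, Set.indicator_of_notMem (fun hmem => hx (mem_In_iff.1 hmem)),
        ENNReal.ofReal_zero, ENNReal.zero_rpow_of_pos hp]
  rw [lintegral_congr key, MeasureTheory.lintegral_indicator (measurableSet_In (2 * m)) _,
    MeasureTheory.setLIntegral_const, mu_In]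

end Aux2

section Aux3

/-! ### Summation identities -/

lemma sum_interchange (F : ℕ → ℝ) (q : ℕ) :
    ∑ j ∈ Finset.range q, ∑ i ∈ Finset.range j, F i
      = ∑ i ∈ Finset.range q, ((q - 1 - i : ℕ) : ℝ) * F i := by
  induction q with
  | zero => simp
  | succ q ih =>
    rw [Finset.sum_range_succ, ih,
      Finset.sum_range_succ (f := fun i => ((q + 1 - 1 - i : ℕ) : ℝ) * F i)]
    have h0 : ((q + 1 - 1 - q : ℕ) : ℝ) = 0 := by norm_num
    rw [h0, zero_mul, add_zero, ← Finset.sum_add_distrib]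
    refine Finset.sum_congr rfl fun i hi => ?_
    have hi' := Finset.mem_range.1 hi
    rw [show (q + 1 - 1 - i : ℕ) = (q - 1 - i) + 1 by omega]
    push_cast
    ring

lemma sum_range_four_mul (f : ℕ → ℝ) (n : ℕ) :
    ∑ r ∈ Finset.range (4 * n), f r
      = ∑ u ∈ Finset.range n, (f (4 * u) + f (4 * u + 1) + f (4 * u + 2) + f (4 * u + 3)) := by
  induction n with
  | zero => simp
  | succ n ih =>
    have hL : ∑ r ∈ Finset.range (4 * (n + 1)), f r
        = ∑ r ∈ Finset.range (4 * n), f r + f (4 * n) + f (4 * n + 1)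
            + f (4 * n + 2) + f (4 * n + 3) := by
      rw [show 4 * (n + 1) = 4 * n + 1 + 1 + 1 + 1 by ring, Finset.sum_range_succ,
        Finset.sum_range_succ, Finset.sum_range_succ, Finset.sum_range_succ,
        show 4 * n + 1 + 1 + 1 = 4 * n + 3 by ring, show 4 * n + 1 + 1 = 4 * n + 2 by ring]
    rw [hL, ih, Finset.sum_range_succ]
    ring

/-! ### Sums of signs -/

lemma sum_pm_int {s : Finset ℕ} {f : ℕ → ℝ} (hf : ∀ u ∈ s, f u = 1 ∨ f u = -1) :
    ∃ z : ℤ, (∑ u ∈ s, f u) = (z : ℝ) ∧ (z + s.card) % 2 = 0 := by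
  classical
  induction s using Finset.induction_on with
  | empty => exact ⟨0, by simp, by simp⟩
  | @insert a s ha ih =>
    obtain ⟨z, hz, hpar⟩ := ih fun u hu => hf u (Finset.mem_insert_of_mem hu)
    rw [Finset.sum_insert ha, Finset.card_insert_of_notMem ha, hz]
    rcases hf a (Finset.mem_insert_self a s) with h1 | h1
    · exact ⟨z + 1, by rw [h1]; push_cast; ring, by push_cast at hpar ⊢; omega⟩
    · exact ⟨z - 1, by rw [h1]; push_cast; ring, by push_cast at hpar ⊢; omega⟩

lemma abs_sum_pm_odd {n : ℕ} {f : ℕ → ℝ} (hf : ∀ u ∈ Finset.range n, f u = 1 ∨ f u = -1)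
    (hn : n % 2 = 1) : 1 ≤ |∑ u ∈ Finset.range n, f u| := by
  obtain ⟨z, hz, hpar⟩ := sum_pm_int hf
  rw [Finset.card_range] at hpar
  have hz0 : z ≠ 0 := by omega
  have h1 : (1 : ℤ) ≤ |z| := Int.one_le_abs hz0
  rw [hz, ← Int.cast_abs]
  exact_mod_cast h1

lemma prod_rad_pm (s : Finset ℕ) (g : ℕ → ℕ) (c : ℕ → ℕ) (x : G) :
    (∏ j ∈ s, rad (g j) x ^ c j) = 1 ∨ (∏ j ∈ s, rad (g j) x ^ c j) = -1 := by
  apply mul_self_eq_one_iff.1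
  rw [← Finset.prod_mul_distrib]
  exact Finset.prod_eq_one fun j _ => by rw [← mul_pow, rad_mul_self, one_pow]

/-! ### Bit computations -/

lemma testBit_four_mul_add_zero {u v : ℕ} (hv : v < 4) :
    (4 * u + v).testBit 0 = v.testBit 0 := by
  rw [show 4 * u + v = 2 ^ 2 * u + v by ring,
    Nat.testBit_two_pow_mul_add u (show v < 2 ^ 2 by omega) 0, if_pos (by norm_num)]

lemma testBit_four_mul_add_one {u v : ℕ} (hv : v < 4) :
    (4 * u + v).testBit 1 = v.testBit 1 := by
  rw [show 4 * u + v = 2 ^ 2 * u + v by ring,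
    Nat.testBit_two_pow_mul_add u (show v < 2 ^ 2 by omega) 1, if_pos (by norm_num)]

lemma testBit_four_mul_add {u v j : ℕ} (hv : v < 4) :
    (4 * u + v).testBit (j + 2) = u.testBit j := by
  rw [show 4 * u + v = 2 ^ 2 * u + v by ring,
    Nat.testBit_two_pow_mul_add u (show v < 2 ^ 2 by omega) (j + 2), if_neg (by omega),
    show j + 2 - 2 = j by omega]

/-! ### Splitting the Kaczmarz product -/

lemma prod_split_two {M : ℕ} (F : ℕ → ℝ) :
    ∏ j ∈ Finset.range (M + 2), F j = F 0 * F 1 * ∏ j ∈ Finset.range M, F (j + 2) := by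
  rw [show M + 2 = M + 1 + 1 from rfl, Finset.prod_range_succ', Finset.prod_range_succ']
  have h : (∏ j ∈ Finset.range M, F (j + 1 + 1)) = ∏ j ∈ Finset.range M, F (j + 2) := rfl
  rw [h]
  ring

lemma kacz_block_four {L u v : ℕ} (hv : v < 4) (huv : 4 * u + v < 2 ^ (L + 2)) (x : G) :
    kacz (2 ^ (L + 2) + (4 * u + v)) x
      = rad (L + 2) x * (rad (L + 1) x ^ (v.testBit 0).toNat
          * rad L x ^ (v.testBit 1).toNat
          * ∏ j ∈ Finset.range L, rad (L - 1 - j) x ^ (u.testBit j).toNat) := by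
  rw [kacz_two_pow_add huv, prod_split_two]
  have e2 : (∏ j ∈ Finset.range L, rad (L + 2 - 1 - (j + 2)) x ^ ((4 * u + v).testBit (j + 2)).toNat)
      = ∏ j ∈ Finset.range L, rad (L - 1 - j) x ^ (u.testBit j).toNat :=
    Finset.prod_congr rfl fun j _ => by
      rw [show L + 2 - 1 - (j + 2) = L - 1 - j by omega, testBit_four_mul_add hv]
  rw [e2, show L + 2 - 1 - 0 = L + 1 by omega, show L + 2 - 1 - 1 = L by omega,
    testBit_four_mul_add_zero hv, testBit_four_mul_add_one hv]

/-! ### Arithmetic of `qA` -/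

lemma qA_le (m : ℕ) : qA m ≤ 2 * 4 ^ m := by
  induction m with
  | zero => simp [qA]
  | succ m ih =>
    have h1 : qA (m + 1) = qA m + 4 ^ (m + 1) := Finset.sum_range_succ _ _
    have h2 : (4:ℕ) ^ (m + 1) = 4 ^ m * 4 := pow_succ 4 m
    omega

lemma qA_decomp (k : ℕ) : qA (k + 3) = 4 ^ (k + 3) + (4 * qA (k + 1) + 1) := by
  have h1 : qA (k + 3) = qA (k + 2) + 4 ^ (k + 3) := Finset.sum_range_succ _ _
  have h2 : qA (k + 2) = 4 * qA (k + 1) + 1 := by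
    show ∑ i ∈ Finset.range (k + 2 + 1), 4 ^ i = 4 * ∑ i ∈ Finset.range (k + 1 + 1), 4 ^ i + 1
    rw [Finset.sum_range_succ' (fun i => (4:ℕ) ^ i) (k + 2), Finset.mul_sum]
    congr 1
    · refine Finset.sum_congr rfl fun i _ => ?_
      rw [pow_succ]
      ring
  omega

lemma qA_odd (t : ℕ) : qA t % 2 = 1 := by
  induction t with
  | zero => simp [qA]
  | succ t ih =>
    have h1 : qA (t + 1) = qA t + 4 ^ (t + 1) := Finset.sum_range_succ _ _
    have h2 : (4:ℕ) ^ (t + 1) = 4 ^ t * 4 := pow_succ 4 t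
    omega

lemma qA_pos (t : ℕ) : 0 < qA t := by
  have := qA_odd t
  omega

/-! ### The main lower bound for `sigmaK` -/

lemma sigma_lower {k : ℕ} (x : G)
    (hx1 : x (2 * k + 5) = 1) (hx2 : x (2 * k + 4) = 0) :
    2 / (qA (k + 3) : ℝ) ≤ |sigmaK (fm (k + 3)) (qA (k + 3)) x| := by
  have hq4 : 0 < (4:ℕ) ^ (k + 3) := by positivity
  have hqd : qA (k + 3) = 4 ^ (k + 3) + (4 * qA (k + 1) + 1) := qA_decomp k
  have hq2 : qA (k + 3) ≤ 2 * 4 ^ (k + 3) := qA_le (k + 3)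
  have hq0 : 0 < qA (k + 3) := qA_pos (k + 3)
  set Q := qA (k + 1) with hQdef
  set q := qA (k + 3) with hqdef
  set R : ℕ → ℝ := fun u => ∏ j ∈ Finset.range (2 * k + 4),
    rad (2 * k + 4 - 1 - j) x ^ (u.testBit j).toNat with hRdef
  have hp4 : (4:ℕ) ^ (k + 3) = 2 ^ (2 * k + 4 + 2) := by
    rw [four_pow, show 2 * (k + 3) = 2 * k + 4 + 2 by ring]
  have hrad5 : rad (2 * k + 4 + 1) x = -1 := rad_one_coord hx1
  have hrad4 : rad (2 * k + 4) x = 1 := rad_zero_coord hx2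
  -- evaluate the four kacz values
  have hkacz : ∀ u v : ℕ, v < 4 → 4 * u + v < 4 ^ (k + 3) →
      kacz (4 ^ (k + 3) + (4 * u + v)) x
        = rad (2 * k + 4 + 2) x * ((if v.testBit 0 then (-1:ℝ) else 1) * R u) := by
    intro u v hv huv
    rw [hp4] at huv ⊢
    rw [kacz_block_four hv huv, hrad5, hrad4, one_pow, mul_one]
    cases hb : v.testBit 0
    · simp only [hb, Bool.toNat_false, pow_zero, one_mul, Bool.false_eq_true, if_false, hRdef]
    · simp only [hb, Bool.toNat_true, pow_one, if_true, hRdef]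
  -- the sum of partial sums
  have hblock : ∀ u ∈ Finset.range Q,
      (((q - 1 - (4 ^ (k + 3) + 4 * u) : ℕ) : ℝ) * kacz (4 ^ (k + 3) + 4 * u) x
        + ((q - 1 - (4 ^ (k + 3) + (4 * u + 1)) : ℕ) : ℝ) * kacz (4 ^ (k + 3) + (4 * u + 1)) x
        + ((q - 1 - (4 ^ (k + 3) + (4 * u + 2)) : ℕ) : ℝ) * kacz (4 ^ (k + 3) + (4 * u + 2)) x
        + ((q - 1 - (4 ^ (k + 3) + (4 * u + 3)) : ℕ) : ℝ) * kacz (4 ^ (k + 3) + (4 * u + 3)) x)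
      = 2 * (rad (2 * k + 4 + 2) x * R u) := by
    intro u hu
    have hu' : u < Q := Finset.mem_range.1 hu
    have hb0 : 4 * u + 0 < 4 ^ (k + 3) := by omega
    have h0 := hkacz u 0 (by norm_num) hb0
    have h1 := hkacz u 1 (by norm_num) (by omega)
    have h2 := hkacz u 2 (by norm_num) (by omega)
    have h3 := hkacz u 3 (by norm_num) (by omega)
    rw [show (4 * u + 0 : ℕ) = 4 * u from rfl] at h0
    rw [h0, h1, h2, h3]
    rw [show (0:ℕ).testBit 0 = false by decide, show (1:ℕ).testBit 0 = true by decide,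
      show (2:ℕ).testBit 0 = false by decide, show (3:ℕ).testBit 0 = true by decide]
    have w0 : (q - 1 - (4 ^ (k + 3) + 4 * u) : ℕ) = 4 * Q - 4 * u := by omega
    have w1 : (q - 1 - (4 ^ (k + 3) + (4 * u + 1)) : ℕ) = 4 * Q - 4 * u - 1 := by omega
    have w2 : (q - 1 - (4 ^ (k + 3) + (4 * u + 2)) : ℕ) = 4 * Q - 4 * u - 2 := by omega
    have w3 : (q - 1 - (4 ^ (k + 3) + (4 * u + 3)) : ℕ) = 4 * Q - 4 * u - 3 := by omega
    rw [w0, w1, w2, w3]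
    have hc0 : ((4 * Q - 4 * u : ℕ) : ℝ) = 4 * (Q:ℝ) - 4 * u := by
      push_cast [Nat.cast_sub (by omega : 4 * u ≤ 4 * Q)]
      ring
    have hc1 : ((4 * Q - 4 * u - 1 : ℕ) : ℝ) = 4 * (Q:ℝ) - 4 * u - 1 := by
      push_cast [Nat.cast_sub (by omega : 4 * u + 1 ≤ 4 * Q), show (4 * Q - 4 * u - 1 : ℕ) = 4 * Q - (4 * u + 1) by omega]
      ring
    have hc2 : ((4 * Q - 4 * u - 2 : ℕ) : ℝ) = 4 * (Q:ℝ) - 4 * u - 2 := by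
      push_cast [Nat.cast_sub (by omega : 4 * u + 2 ≤ 4 * Q), show (4 * Q - 4 * u - 2 : ℕ) = 4 * Q - (4 * u + 2) by omega]
      ring
    have hc3 : ((4 * Q - 4 * u - 3 : ℕ) : ℝ) = 4 * (Q:ℝ) - 4 * u - 3 := by
      push_cast [Nat.cast_sub (by omega : 4 * u + 3 ≤ 4 * Q), show (4 * Q - 4 * u - 3 : ℕ) = 4 * Q - (4 * u + 3) by omega]
      ring
    rw [hc0, hc1, hc2, hc3]
    simp only [Bool.false_eq_true, eq_self_iff_true, if_true, if_false]
    ring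
  have hsum : ∑ j ∈ Finset.range q, SK (fm (k + 3)) j x
      = 2 * (rad (2 * k + 4 + 2) x * ∑ u ∈ Finset.range Q, R u) := by
    simp only [SK]
    rw [sum_interchange (fun i => coefK (fm (k + 3)) i * kacz i x) q]
    have step3 : ∀ i ∈ Finset.range q,
        ((q - 1 - i : ℕ) : ℝ) * (coefK (fm (k + 3)) i * kacz i x)
          = if 4 ^ (k + 3) ≤ i then ((q - 1 - i : ℕ) : ℝ) * kacz i x else 0 := by
      intro i hi
      have hi' := Finset.mem_range.1 hi
      by_cases h : 4 ^ (k + 3) ≤ i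
      · rw [if_pos h, coefK_fm_block h (by omega), one_mul]
      · rw [if_neg h, coefK_fm_low (by omega) (by omega), zero_mul, mul_zero]
    rw [Finset.sum_congr rfl step3, ← Finset.sum_filter]
    have hfilter : (Finset.range q).filter (fun i => 4 ^ (k + 3) ≤ i)
        = Finset.Ico (4 ^ (k + 3)) q := by
      ext i
      simp only [Finset.mem_filter, Finset.mem_range, Finset.mem_Ico]
      omega
    rw [hfilter, Finset.sum_Ico_eq_sum_range, show q - 4 ^ (k + 3) = 4 * Q + 1 by omega,
      Finset.sum_range_succ, show (q - 1 - (4 ^ (k + 3) + 4 * Q) : ℕ) = 0 by omega]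
    rw [Nat.cast_zero, zero_mul, add_zero, sum_range_four_mul,
      Finset.sum_congr rfl hblock, ← Finset.mul_sum, ← Finset.mul_sum]
  -- conclude
  have hRpm : ∀ u ∈ Finset.range Q, R u = 1 ∨ R u = -1 := fun u _ =>
    prod_rad_pm _ _ _ x
  have hT : 1 ≤ |∑ u ∈ Finset.range Q, R u| := abs_sum_pm_odd hRpm (qA_odd (k + 1))
  have hC : |rad (2 * k + 4 + 2) x| = 1 := by
    rcases rad_pm (2 * k + 4 + 2) x with h | h <;> rw [h] <;> norm_num
  have habs : 2 ≤ |∑ j ∈ Finset.range q, SK (fm (k + 3)) j x| := by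
    rw [hsum, abs_mul, abs_mul, hC, one_mul, abs_two]
    linarith [hT]
  show 2 / (q : ℝ) ≤ |(∑ j ∈ Finset.range q, SK (fm (k + 3)) j x) / (q : ℝ)|
  have hq' : (0:ℝ) < (q:ℝ) := by exact_mod_cast hq0
  rw [abs_div, abs_of_pos hq']
  exact (div_le_div_iff_of_pos_right hq').2 habs

end Aux3

section Final

lemma wnorm_ge (f : G → ℝ) (p l : ℝ) (hl : 0 < l) :
    ENNReal.ofReal l * μ {x : G | l < |f x|} ^ (1 / p) ≤ wnorm f p :=
  le_iSup₂ (f := fun (l : ℝ) (_ : 0 < l) =>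
    ENNReal.ofReal l * μ {x : G | l < |f x|} ^ (1 / p)) l hl

lemma two_rpow_add (a b : ℝ) : (2:ℝ≥0∞) ^ a * (2:ℝ≥0∞) ^ b = (2:ℝ≥0∞) ^ (a + b) :=
  (ENNReal.rpow_add a b (by norm_num) (by norm_num)).symm

lemma ofReal_two_rpow (y : ℝ) : ENNReal.ofReal ((2:ℝ) ^ y) = (2:ℝ≥0∞) ^ y := by
  rw [← ENNReal.ofReal_rpow_of_pos (by norm_num : (0:ℝ) < 2), ENNReal.ofReal_ofNat]

end Final


/-- Weak `L^p` lower bound: `‖σ_{q_m}^κ f_m‖_{L_{p,∞}} ≥ c_p 2^{2m(1/p−2)} ‖f_m*‖_p`. -/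
theorem weak_norm_lower_bound_for_sigma_qm (p : ℝ) (hp0 : 0 < p) (hp : p < 1 / 2) :
    ∃ c : ℝ, 0 < c ∧ ∀ m : ℕ, 3 ≤ m →
      ENNReal.ofReal (c * (2 : ℝ) ^ ((2 * m : ℝ) * (1 / p - 2))) *
          (∫⁻ x, fstar (fm m) x ^ p ∂μ) ^ (1 / p)
        ≤ wnorm (sigmaK (fm m) (qA m)) p := by

  have hp0' : (0:ℝ) < 1 / p := by positivity
  refine ⟨(2:ℝ) ^ (-(2 / p) - 1), Real.rpow_pos_of_pos (by norm_num) _, ?_⟩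
  intro m hm
  obtain ⟨k, rfl⟩ : ∃ k, m = k + 3 := ⟨m - 3, by omega⟩
  have hq0 : 0 < qA (k + 3) := qA_pos (k + 3)
  have hq2 : qA (k + 3) ≤ 2 * 4 ^ (k + 3) := qA_le (k + 3)
  set q : ℕ := qA (k + 3) with hqdef
  have hq' : (0:ℝ) < (q:ℝ) := by exact_mod_cast hq0
  have hql : (0:ℝ) < (q:ℝ)⁻¹ := inv_pos.2 hq'
  have hwn : ENNReal.ofReal ((q:ℝ)⁻¹)
      * μ {x : G | (q:ℝ)⁻¹ < |sigmaK (fm (k + 3)) q x|} ^ (1 / p)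
      ≤ wnorm (sigmaK (fm (k + 3)) q) p := wnorm_ge _ p _ hql
  have hset : {x : G | x (2 * k + 5) = 1 ∧ x (2 * k + 4) = 0}
      ⊆ {x : G | (q:ℝ)⁻¹ < |sigmaK (fm (k + 3)) q x|} := by
    rintro x ⟨h1, h2⟩
    have hlow := sigma_lower x h1 h2
    have h12 : (q:ℝ)⁻¹ < 2 / q := by
      rw [inv_eq_one_div]
      exact (div_lt_div_iff_of_pos_right hq').2 one_lt_two
    exact lt_of_lt_of_le h12 hlow
  have hmu : (4:ℝ≥0∞)⁻¹ ≤ μ {x : G | (q:ℝ)⁻¹ < |sigmaK (fm (k + 3)) q x|} := by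
    rw [← mu_pair (show (2 * k + 5 : ℕ) ≠ 2 * k + 4 by omega)]
    exact measure_mono hset
  refine le_trans ?_ hwn
  rw [lintegral_fstar (k + 3) hp0]
  refine le_trans ?_ (mul_le_mul_right (ENNReal.rpow_le_rpow hmu (le_of_lt hp0')) _)
  -- pure ENNReal-arithmetic from here on
  have hmul : ENNReal.ofReal ((2:ℝ) ^ (-(2 / p) - 1)
        * (2:ℝ) ^ ((2 * ((k + 3 : ℕ) : ℝ)) * (1 / p - 2)))
      = (2:ℝ≥0∞) ^ ((-(2 / p) - 1) + (2 * ((k + 3 : ℕ) : ℝ)) * (1 / p - 2)) := by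
    rw [ENNReal.ofReal_mul (by positivity), ofReal_two_rpow, ofReal_two_rpow, two_rpow_add]
  have h4R : ENNReal.ofReal ((4:ℝ) ^ (k + 3)) = (2:ℝ≥0∞) ^ (((2 * (k + 3) : ℕ)) : ℝ) := by
    rw [show ((4:ℝ)) ^ (k + 3) = 2 ^ (2 * (k + 3)) by
        rw [show (4:ℝ) = 2 ^ 2 by norm_num, ← pow_mul],
      ← Real.rpow_natCast 2 (2 * (k + 3)), ofReal_two_rpow]
  have hinv : ((2:ℝ≥0∞)⁻¹) ^ (2 * (k + 3)) = (2:ℝ≥0∞) ^ (-(((2 * (k + 3) : ℕ)) : ℝ)) := by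
    rw [ENNReal.rpow_neg, ENNReal.rpow_natCast, ← ENNReal.inv_pow]
  have hbody : ((ENNReal.ofReal ((4:ℝ) ^ (k + 3))) ^ p * ((2:ℝ≥0∞)⁻¹) ^ (2 * (k + 3))) ^ (1 / p)
      = (2:ℝ≥0∞) ^ (((((2 * (k + 3) : ℕ)) : ℝ) * p + -(((2 * (k + 3) : ℕ)) : ℝ)) * (1 / p)) := by
    rw [h4R, hinv, ← ENNReal.rpow_mul, two_rpow_add, ← ENNReal.rpow_mul]
  have h2two : (2:ℝ≥0∞) ^ ((2:ℝ)) = 4 := by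
    rw [show ((2:ℝ)) = ((2:ℕ):ℝ) by norm_num, ENNReal.rpow_natCast]
    norm_num
  have h4inv : ((4:ℝ≥0∞))⁻¹ ^ (1 / p) = (2:ℝ≥0∞) ^ ((-2) * (1 / p)) := by
    rw [← h2two, ← ENNReal.rpow_neg, ← ENNReal.rpow_mul]
  have hofq : (2:ℝ≥0∞) ^ (-(((2 * (k + 3) + 1 : ℕ)) : ℝ)) ≤ ENNReal.ofReal ((q:ℝ)⁻¹) := by
    have hqle : (q:ℝ) ≤ (2:ℝ) ^ (2 * (k + 3) + 1 : ℕ) := by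
      have h2 : (2:ℕ) ^ (2 * (k + 3) + 1) = 2 * 4 ^ (k + 3) := by
        rw [pow_succ, ← four_pow]
        ring
      have h3 : q ≤ 2 ^ (2 * (k + 3) + 1) := by omega
      exact_mod_cast h3
    have h1 : ((2:ℝ) ^ (2 * (k + 3) + 1 : ℕ))⁻¹ ≤ (q:ℝ)⁻¹ :=
      inv_anti₀ hq' hqle
    refine le_trans (le_of_eq ?_) (ENNReal.ofReal_le_ofReal h1)
    rw [ENNReal.ofReal_inv_of_pos (by positivity),
      ENNReal.ofReal_pow (by norm_num : (0:ℝ) ≤ 2), ENNReal.ofReal_ofNat,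
      ENNReal.rpow_neg, ENNReal.rpow_natCast]
  rw [hmul, hbody, two_rpow_add]
  have key : ∀ E : ℝ, E = -(((2 * (k + 3) + 1 : ℕ)) : ℝ) + (-2) * (1 / p) →
      (2:ℝ≥0∞) ^ E ≤ ENNReal.ofReal ((q:ℝ)⁻¹) * ((4:ℝ≥0∞))⁻¹ ^ (1 / p) := by
    intro E hE
    rw [hE, ← two_rpow_add, h4inv]
    exact mul_le_mul_left hofq _
  refine key _ ?_
  push_cast
  field_simp
  ring
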